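/- Let G be a simple graph, v a vertex, and k a positive integer. Then the subgraph D_k(v) formed by all vertices and edges appearing in closed walks at v of length at most 2k has the same vertex set as L_k(v) (namely the vertices at distance at most k from v), and its edge set is the edge set of L_k(v) minus exactly those edges {i,j} with d(v,i) = d(v,j) = k. -/

import Mathlib

/-!
A closed walk at `v` through a vertex `u` has length at least `2 d(v,u)`, and one through an
edge `{i,j}` has length at least `d(v,i) + 1 + d(v,j)`; geodesics realise both bounds. So `u` lies
in the walk subgraph of radius `m` iff `2 d(v,u) ≤ m`, and `{i,j}` iff `d(v,i) + d(v,j) + 1 ≤ m`.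
Since the distances of adjacent vertices differ by at most one, passing from `m = 2k + 1` to
`m = 2k` loses no vertex and exactly the edges with `d(v,i) = d(v,j) = k`.
-/

/-- The subgraph of `G` formed by all vertices and edges appearing in some closed walk
at `v` of length at most `m`. -/
def walkSubgraph {V : Type*} (G : SimpleGraph V) (v : V) (m : ℕ) : G.Subgraph where
  verts := {u | ∃ p : G.Walk v v, p.length ≤ m ∧ u ∈ p.support}
  Adj i j := ∃ p : G.Walk v v, p.length ≤ m ∧ s(i, j) ∈ p.edges
  adj_sub := fun ⟨p, _, he⟩ => p.adj_of_mem_edges he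
  edge_vert := fun ⟨p, hl, he⟩ => ⟨p, hl, p.fst_mem_support_of_mem_edges he⟩
  symm := ⟨fun i j ⟨p, hl, he⟩ => ⟨p, hl, by rwa [Sym2.eq_swap] at he⟩⟩

open SimpleGraph

namespace SimpleGraph.Walk

variable {V : Type*} {G : SimpleGraph V} {a b : V}

lemma dist_add_dist_le_length (p : G.Walk a b) {u : V} (hu : u ∈ p.support) :
    G.dist a u + G.dist u b ≤ p.length := by
  classical
  calc G.dist a u + G.dist u b ≤ (p.takeUntil u hu).length + (p.dropUntil u hu).length :=
        add_le_add (dist_le _) (dist_le _)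
    _ = p.length := by rw [← length_append, take_spec]

lemma dist_add_dist_le_length_of_mem_edges (p : G.Walk a b) {i j : V} (h : s(i, j) ∈ p.edges) :
    G.dist a i + 1 + G.dist j b ≤ p.length ∨ G.dist a j + 1 + G.dist i b ≤ p.length := by
  obtain ⟨n, hn, hij⟩ := p.mk_mem_edges_iff_exists.mp h
  have hpre : G.dist a (p.getVert n) ≤ n :=
    (dist_le (p.take n)).trans (by rw [take_length]; exact min_le_left _ _)
  have hsuf : G.dist (p.getVert (n + 1)) b ≤ p.length - (n + 1) :=
    (dist_le (p.drop (n + 1))).trans_eq (drop_length _ _)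
  rcases Sym2.eq_iff.mp hij with ⟨rfl, rfl⟩ | ⟨rfl, rfl⟩ <;> omega

end SimpleGraph.Walk

section

variable {V : Type*} (G : SimpleGraph V) (v : V) (m : ℕ)

lemma mem_walkSubgraph_verts_iff {u : V} :
    u ∈ (walkSubgraph G v m).verts ↔ G.Reachable v u ∧ 2 * G.dist v u ≤ m := by
  classical
  constructor
  · rintro ⟨p, hlen, hu⟩
    have := p.dist_add_dist_le_length hu
    rw [dist_comm (u := u)] at this
    exact ⟨⟨p.takeUntil u hu⟩, by omega⟩
  · rintro ⟨hreach, hdist⟩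
    obtain ⟨p, hp⟩ := hreach.exists_walk_length_eq_dist
    refine ⟨p.append p.reverse, ?_, by simp⟩
    rw [Walk.length_append, Walk.length_reverse]
    omega

lemma walkSubgraph_adj_iff {i j : V} :
    (walkSubgraph G v m).Adj i j ↔
      G.Adj i j ∧ G.Reachable v i ∧ G.dist v i + G.dist v j + 1 ≤ m := by
  constructor
  · intro hij
    have hi := ((mem_walkSubgraph_verts_iff G v m).mp hij.fst_mem).1
    obtain ⟨p, hlen, he⟩ := hij
    have := p.dist_add_dist_le_length_of_mem_edges he
    rw [dist_comm (u := i), dist_comm (u := j)] at this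
    exact ⟨p.adj_of_mem_edges he, hi, by omega⟩
  · rintro ⟨hadj, hreach, hdist⟩
    obtain ⟨p, hp⟩ := hreach.exists_walk_length_eq_dist
    obtain ⟨q, hq⟩ := (hreach.trans hadj.reachable).exists_walk_length_eq_dist
    refine ⟨p.append (.cons hadj q.reverse), ?_, by simp [Walk.edges_append]⟩
    rw [Walk.length_append, Walk.length_cons, Walk.length_reverse]
    omega

end

theorem walkSubgraph_D_eq_L_minus_outer_edges_general
    {V : Type*} (G : SimpleGraph V) (v : V) (k : ℕ) :
    (walkSubgraph G v (2 * k)).verts = (walkSubgraph G v (2 * k + 1)).verts ∧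
      (walkSubgraph G v (2 * k)).verts = {u | G.Reachable v u ∧ G.dist v u ≤ k} ∧
      ∀ i j, (walkSubgraph G v (2 * k)).Adj i j ↔
        (walkSubgraph G v (2 * k + 1)).Adj i j ∧
          ¬(G.dist v i = k ∧ G.dist v j = k) := by
  refine ⟨?_, ?_, fun i j => ?_⟩
  · ext u
    simp only [mem_walkSubgraph_verts_iff]
    exact and_congr_right fun _ => by omega
  · ext u
    simp only [mem_walkSubgraph_verts_iff, Set.mem_ofPred_eq]
    exact and_congr_right fun _ => by omega
  · simp only [walkSubgraph_adj_iff]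
    constructor
    · rintro ⟨hadj, hreach, hdist⟩
      exact ⟨⟨hadj, hreach, by omega⟩, by omega⟩
    · rintro ⟨⟨hadj, hreach, hdist⟩, houter⟩
      -- `d(v,i) + d(v,j) = 2k` with `|d(v,i) - d(v,j)| ≤ 1` forces `d(v,i) = d(v,j) = k`.
      have := hadj.diff_dist_adj (u := v)
      exact ⟨hadj, hreach, by omega⟩

/-- For `k ≥ 1`, the subgraph `D_k(v)` (from closed walks at `v` of length at most `2k`)
has the same vertex set as `L_k(v)` (from closed walks of length at most `2k + 1`),
namely the vertices at distance at most `k` from `v`, and its edges are exactly the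
edges of `L_k(v)` except those `{i, j}` with `d(v, i) = d(v, j) = k`. -/
theorem walkSubgraph_D_eq_L_minus_outer_edges
    {V : Type*} (G : SimpleGraph V) (v : V) (k : ℕ) (hk : 1 ≤ k) :
    (walkSubgraph G v (2 * k)).verts = (walkSubgraph G v (2 * k + 1)).verts ∧
      (walkSubgraph G v (2 * k)).verts = {u | G.Reachable v u ∧ G.dist v u ≤ k} ∧
      ∀ i j, (walkSubgraph G v (2 * k)).Adj i j ↔
        (walkSubgraph G v (2 * k + 1)).Adj i j ∧
          ¬(G.dist v i = k ∧ G.dist v j = k) :=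
  walkSubgraph_D_eq_L_minus_outer_edges_general G v k
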